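/- arXiv:2401.05214 — 2 statements merged into one kernel-verified Lean document; each statement's English description precedes it below -/
import Mathlib

section
/- Let K be a reproducing kernel Krein space of analytic functions on a domain Ω on which all difference-quotient operators D_w (w ∈ Ω) are well-defined and bounded. Let f be analytic on Ω such that D_w(f) ∈ K for every w ∈ Ω and 1/f is meromorphic on Ω. Then for every w ∈ Ω with f(w) ≠ 0, the difference-quotient operator D_w maps the conjugated space (1/f)·K into itself. -/
open Complex

/-- The difference-quotient operator: `Dq w f ζ = (f ζ - f w)/(ζ - w)` for `ζ ≠ w`,
and `Dq w f w = f'(w)`. -/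
noncomputable def Dq (w : ℂ) (f : ℂ → ℂ) : ℂ → ℂ :=
  fun ζ => if ζ = w then deriv f w else (f ζ - f w) / (ζ - w)

/-- If a space `K` of analytic functions on `Ω` is invariant under all difference-quotient
operators `D_w` (`w ∈ Ω`), `f` is analytic on `Ω` with `D_w(f) ∈ K` for all `w ∈ Ω`, and `1/f`
is meromorphic on `Ω` (`f` not vanishing identically near any point, here: `f w ≠ 0`), then
`D_w` maps the conjugated space `(1/f)·K` into itself: for each `g ∈ K` there is `g' ∈ K` with
`D_w(g/f) = g'/f` on `Ω` away from zeros of `f`. -/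
theorem diffQuot_conjugated_space_invariant (Ω : Set ℂ) (hΩ : IsOpen Ω)
    (K : Submodule ℂ (ℂ → ℂ))
    (hKan : ∀ g ∈ K, AnalyticOnNhd ℂ g Ω)
    (hKD : ∀ w ∈ Ω, ∀ g ∈ K, Dq w g ∈ K)
    (f : ℂ → ℂ) (hfan : AnalyticOnNhd ℂ f Ω)
    (hDf : ∀ w ∈ Ω, Dq w f ∈ K)
    (w : ℂ) (hw : w ∈ Ω) (hfw : f w ≠ 0) (g : ℂ → ℂ) (hg : g ∈ K) :
    ∃ g' ∈ K, ∀ ζ ∈ Ω, f ζ ≠ 0 → ζ ≠ w →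
      Dq w (fun z => g z / f z) ζ = g' ζ / f ζ := by
  refine ⟨Dq w g - (g w / f w) • Dq w f, ?_, ?_⟩
  · exact K.sub_mem (hKD w hw g hg) (K.smul_mem _ (hDf w hw))
  · intro ζ hζ hfζ hne
    have hsub : ζ - w ≠ 0 := sub_ne_zero.mpr hne
    simp only [Dq, if_neg hne, Pi.sub_apply, Pi.smul_apply, smul_eq_mul]
    field_simp
    ring
end

section
/- Let a ∈ ℝ, b ≥ 0 and ν a positive Borel measure on ℝ with ∫ dν(t)/(1+t²) < ∞, and define q(ζ) = a + b·ζ + ∫ (1/(t-ζ) - t/(1+t²)) dν(t) for ζ ∈ ℂ \ ℝ. Then q is analytic on ℂ \ ℝ, satisfies q(conj ζ) = conj(q(ζ)), and Im q(ζ) ≥ 0 for Im ζ > 0. -/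
/-! Writing the kernel as `(ζ + (1 + ζ²)/(t - ζ))/(1 + t²)` shows that it, and its `ζ`-derivative
`1/(t - ζ)²`, are dominated by `C/(1 + t²)` locally uniformly in `ζ` off the real axis, so the
integral is holomorphic there by differentiation under the integral sign. Conjugating the kernel
replaces `ζ` by `ζ̄`, and since `t/(1 + t²)` is real, `Im` of the kernel is
`Im ζ / |t - ζ|² ≥ 0` on the upper half-plane. -/

open Complex MeasureTheory ComplexConjugate Metric

noncomputable def herglotzKernel (ζ : ℂ) (t : ℝ) : ℂ :=
  1 / ((t : ℂ) - ζ) - (t : ℂ) / (1 + (t : ℂ) ^ 2)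

lemma ofReal_sub_ne_zero_of_im_ne_zero {ζ : ℂ} (hζ : ζ.im ≠ 0) (t : ℝ) : (t : ℂ) - ζ ≠ 0 := by
  intro h
  exact hζ (by simpa using congrArg im h)

lemma abs_im_le_norm_ofReal_sub (t : ℝ) (ζ : ℂ) : |ζ.im| ≤ ‖(t : ℂ) - ζ‖ := by
  simpa using abs_im_le_norm ((t : ℂ) - ζ)

lemma norm_one_add_ofReal_sq (t : ℝ) : ‖1 + (t : ℂ) ^ 2‖ = 1 + t ^ 2 := by
  rw [← ofReal_pow, ← ofReal_one, ← ofReal_add, norm_real, Real.norm_of_nonneg (by positivity)]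

lemma one_add_ofReal_sq_ne_zero (t : ℝ) : 1 + (t : ℂ) ^ 2 ≠ 0 := by
  rw [← norm_ne_zero_iff, norm_one_add_ofReal_sq]
  positivity

lemma one_add_sq_le_mul_norm_ofReal_sub_sq {δ R : ℝ} (hδ : 0 < δ) {ζ : ℂ}
    (hδζ : δ ≤ |ζ.im|) (hζR : ‖ζ‖ ≤ R) (t : ℝ) :
    1 + t ^ 2 ≤ ((1 + 2 * R ^ 2) / δ ^ 2 + 2) * ‖(t : ℂ) - ζ‖ ^ 2 := by
  set d := ‖(t : ℂ) - ζ‖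
  have hδd : δ ≤ d := hδζ.trans (abs_im_le_norm_ofReal_sub t ζ)
  have ht : |t| ≤ d + R := by
    calc |t| = ‖((t : ℂ) - ζ) + ζ‖ := by simp
      _ ≤ d + R := (norm_add_le _ _).trans (by gcongr)
  have hconst : 1 + 2 * R ^ 2 ≤ (1 + 2 * R ^ 2) / δ ^ 2 * d ^ 2 := by
    rw [div_mul_eq_mul_div, le_div_iff₀ (by positivity)]
    gcongr
  have hsq : t ^ 2 ≤ 2 * d ^ 2 + 2 * R ^ 2 := by
    nlinarith [sq_abs t, abs_nonneg t, sq_nonneg (d - R)]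
  linarith

lemma herglotzKernel_eq_div {ζ : ℂ} (hζ : ζ.im ≠ 0) (t : ℝ) :
    herglotzKernel ζ t = (ζ + (1 + ζ ^ 2) / ((t : ℂ) - ζ)) / (1 + (t : ℂ) ^ 2) := by
  have := ofReal_sub_ne_zero_of_im_ne_zero hζ t
  have := one_add_ofReal_sq_ne_zero t
  unfold herglotzKernel
  field_simp
  ring

lemma norm_herglotzKernel_le {ζ : ℂ} (hζ : ζ.im ≠ 0) (t : ℝ) :
    ‖herglotzKernel ζ t‖ ≤ (‖ζ‖ + ‖1 + ζ ^ 2‖ / |ζ.im|) * (1 / (1 + t ^ 2)) := by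
  rw [herglotzKernel_eq_div hζ, norm_div, norm_one_add_ofReal_sq, mul_one_div]
  gcongr
  refine (norm_add_le _ _).trans ?_
  rw [norm_div]
  gcongr
  exact abs_im_le_norm_ofReal_sub t ζ

lemma measurable_herglotzKernel (ζ : ℂ) : Measurable (herglotzKernel ζ) := by
  unfold herglotzKernel
  fun_prop

lemma integrable_herglotzKernel {ν : Measure ℝ}
    (hν : Integrable (fun t : ℝ => 1 / (1 + t ^ 2)) ν) {ζ : ℂ} (hζ : ζ.im ≠ 0) :
    Integrable (herglotzKernel ζ) ν :=
  (hν.const_mul _).mono' (measurable_herglotzKernel ζ).aestronglyMeasurable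
    (ae_of_all _ (norm_herglotzKernel_le hζ))

lemma hasDerivAt_herglotzKernel {ζ : ℂ} (hζ : ζ.im ≠ 0) (t : ℝ) :
    HasDerivAt (herglotzKernel · t) (1 / ((t : ℂ) - ζ) ^ 2) ζ := by
  have h := (((hasDerivAt_id ζ).const_sub (t : ℂ)).inv
    (ofReal_sub_ne_zero_of_im_ne_zero hζ t)).sub_const ((t : ℂ) / (1 + (t : ℂ) ^ 2))
  simpa [herglotzKernel, one_div] using h

lemma hasDerivAt_integral_herglotzKernel {ν : Measure ℝ}
    (hν : Integrable (fun t : ℝ => 1 / (1 + t ^ 2)) ν) {ζ₀ : ℂ} (hζ₀ : ζ₀.im ≠ 0) :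
    HasDerivAt (fun ζ => ∫ t, herglotzKernel ζ t ∂ν) (∫ t, 1 / ((t : ℂ) - ζ₀) ^ 2 ∂ν) ζ₀ := by
  set ε := |ζ₀.im| / 2 with hε_def
  have hε : 0 < ε := by positivity
  have hball : ∀ ζ ∈ ball ζ₀ ε, ε ≤ |ζ.im| ∧ ‖ζ‖ ≤ ‖ζ₀‖ + ε := by
    intro ζ hζ
    rw [mem_ball, dist_eq] at hζ
    have him : |ζ₀.im| - |ζ.im| ≤ ‖ζ - ζ₀‖ :=
      (abs_sub_abs_le_abs_sub _ _).trans (by simpa [abs_sub_comm] using abs_im_le_norm (ζ - ζ₀))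
    have hnorm : ‖ζ‖ - ‖ζ₀‖ ≤ ‖ζ - ζ₀‖ := norm_sub_norm_le _ _
    constructor <;> linarith
  have hne : ∀ ζ ∈ ball ζ₀ ε, ζ.im ≠ 0 := fun ζ hζ => abs_pos.1 (hε.trans_le (hball ζ hζ).1)
  set C := (1 + 2 * (‖ζ₀‖ + ε) ^ 2) / ε ^ 2 + 2
  have hderiv_le : ∀ t : ℝ, ∀ ζ ∈ ball ζ₀ ε, ‖1 / ((t : ℂ) - ζ) ^ 2‖ ≤ C * (1 / (1 + t ^ 2)) := by
    intro t ζ hζ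
    have hpos : 0 < ‖(t : ℂ) - ζ‖ := norm_pos_iff.2 (ofReal_sub_ne_zero_of_im_ne_zero (hne ζ hζ) t)
    rw [norm_div, norm_one, norm_pow, mul_one_div, div_le_div_iff₀ (by positivity) (by positivity),
      one_mul]
    exact one_add_sq_le_mul_norm_ofReal_sub_sq hε (hball ζ hζ).1 (hball ζ hζ).2 t
  exact (hasDerivAt_integral_of_dominated_loc_of_deriv_le (ball_mem_nhds ζ₀ hε)
    (.of_forall fun ζ => (measurable_herglotzKernel ζ).aestronglyMeasurable)
    (integrable_herglotzKernel hν hζ₀)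
    (by fun_prop : Measurable fun t : ℝ => 1 / ((t : ℂ) - ζ₀) ^ 2).aestronglyMeasurable
    (ae_of_all _ hderiv_le) (hν.const_mul C)
    (ae_of_all _ fun t ζ hζ => hasDerivAt_herglotzKernel (hne ζ hζ) t)).2

lemma analyticOnNhd_integral_herglotzKernel {ν : Measure ℝ}
    (hν : Integrable (fun t : ℝ => 1 / (1 + t ^ 2)) ν) :
    AnalyticOnNhd ℂ (fun ζ => ∫ t, herglotzKernel ζ t ∂ν) {z : ℂ | z.im ≠ 0} :=
  DifferentiableOn.analyticOnNhd
    (fun _ hζ => (hasDerivAt_integral_herglotzKernel hν hζ).differentiableAt.differentiableWithinAt)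
    (isOpen_ne.preimage continuous_im)

lemma conj_herglotzKernel (ζ : ℂ) (t : ℝ) :
    conj (herglotzKernel ζ t) = herglotzKernel (conj ζ) t := by
  simp [herglotzKernel]

lemma integral_herglotzKernel_conj (ν : Measure ℝ) (ζ : ℂ) :
    ∫ t, herglotzKernel (conj ζ) t ∂ν = conj (∫ t, herglotzKernel ζ t ∂ν) := by
  simp_rw [← integral_conj, conj_herglotzKernel]

lemma im_herglotzKernel (ζ : ℂ) (t : ℝ) :
    (herglotzKernel ζ t).im = ζ.im / normSq ((t : ℂ) - ζ) := by
  have hreal : (t : ℂ) / (1 + (t : ℂ) ^ 2) = ((t / (1 + t ^ 2) : ℝ) : ℂ) := by push_cast; rfl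
  rw [herglotzKernel, sub_im, hreal, ofReal_im, sub_zero, one_div, inv_im]
  simp

lemma im_integral_herglotzKernel_nonneg {ν : Measure ℝ}
    (hν : Integrable (fun t : ℝ => 1 / (1 + t ^ 2)) ν) {ζ : ℂ} (hζ : 0 < ζ.im) :
    0 ≤ (∫ t, herglotzKernel ζ t ∂ν).im := by
  rw [← RCLike.im_to_complex, ← integral_im (integrable_herglotzKernel hν hζ.ne')]
  refine integral_nonneg fun t => ?_
  rw [RCLike.im_to_complex, im_herglotzKernel]
  exact div_nonneg hζ.le (normSq_nonneg _)

/-- The integral formula `q(ζ) = a + bζ + ∫ (1/(t-ζ) - t/(1+t²)) dν(t)` with `a ∈ ℝ`,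
`b ≥ 0`, and `ν` a positive Borel measure with `∫ dν/(1+t²) < ∞`, defines a function that is
analytic on `ℂ \ ℝ`, satisfies `q(ζ̄) = conj (q ζ)`, and has `Im q ≥ 0` on `ℂ⁺`. -/
theorem integral_formula_is_herglotz (a b : ℝ) (hb : 0 ≤ b) (ν : Measure ℝ)
    (hν : Integrable (fun t : ℝ => 1 / (1 + t ^ 2)) ν)
    (q : ℂ → ℂ)
    (hq : ∀ ζ : ℂ, q ζ = (a : ℂ) + (b : ℂ) * ζ
      + ∫ t : ℝ, (1 / ((t : ℂ) - ζ) - (t : ℂ) / (1 + (t : ℂ) ^ 2)) ∂ν) :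
    AnalyticOnNhd ℂ q {z : ℂ | z.im ≠ 0} ∧
    (∀ ζ : ℂ, ζ.im ≠ 0 → q (conj ζ) = conj (q ζ)) ∧
    (∀ ζ : ℂ, 0 < ζ.im → 0 ≤ (q ζ).im) := by
  obtain rfl : q = fun ζ => a + b * ζ + ∫ t, herglotzKernel ζ t ∂ν := funext hq
  refine ⟨?_, fun ζ _ => ?_, fun ζ hζ => ?_⟩
  · exact (analyticOnNhd_const.add (analyticOnNhd_const.mul analyticOnNhd_id)).add
      (analyticOnNhd_integral_herglotzKernel hν)
  · simp [integral_herglotzKernel_conj]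
  · simp only [add_im, mul_im, ofReal_re, ofReal_im, zero_mul, zero_add, add_zero]
    exact add_nonneg (mul_nonneg hb hζ.le) (im_integral_herglotzKernel_nonneg hν hζ)
end
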